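/- Let Z be a finite set with weights π : Z → ℝ, π z ≥ 0 and ∑_{z ∈ Z} π z = 1, and v : Z → ℝ a value function. Let 𝓦 be a partition of Z and r : Z → ℝ with r z > 0 for all z such that π z / r z is constant on every part of 𝓦; let B(z) = (∑_{z' ∈ W(z)} r z' · v z') / (∑_{z' ∈ W(z)} r z') denote the imaginary-observation base value. Let 𝓗 be a finite index set of correction parts, each equipped with data (finite state and action sets, partial assignment φ_H : Z → Option (states × actions), weights q_H, s_H with ∑_a s_H(h,a) = q_H h and ∑_h q_H h > 0, constant c_H > 0 with ∑_{z : φ_H z ∈ some({h}×A)} π z = c_H · q_H h and ∑_{z : φ_H z = some (h,a)} π z = c_H · s_H(h,a), value functions u_H, and no observed action a with ∑_h s_H(h,a) = 0), with associated correction terms k_H : Z → ℝ. Then the AIVAT estimator AIVAT(z) = B(z) + ∑_{H ∈ 𝓗} k_H(z) is an unbiased estimator of expected value: ∑_{z ∈ Z} π z · AIVAT(z) = ∑_{z ∈ Z} π z · v z. -/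
import Mathlib


/-- Main unbiasedness result for the AIVAT estimator: the imaginary-observation
base value `B z` plus the sum of all correction terms `k_H z` is an unbiased
estimator of the expected terminal value `∑ z, π z * v z`. -/
theorem aivat_unbiased
    {Z : Type*} [Fintype Z] [DecidableEq Z]
    (π : Z → ℝ) (hπ : ∀ z, 0 ≤ π z) (hπsum : ∑ z, π z = 1)
    (v : Z → ℝ)
    -- the terminal-state partition 𝓦 via its part-map W, and base value B
    (W : Z → Finset Z)
    (hWmem : ∀ z, z ∈ W z)
    (hWpart : ∀ z z', z' ∈ W z → W z' = W z)
    (r : Z → ℝ) (hr : ∀ z, 0 < r z)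
    (hconst : ∀ z z', z' ∈ W z → π z * r z' = π z' * r z)
    (B : Z → ℝ)
    (hB : ∀ z, B z = (∑ z' ∈ W z, r z' * v z') / (∑ z' ∈ W z, r z'))
    -- the correction parts, indexed by ι
    {ι : Type*} [Fintype ι]
    (St Ac : ι → Type*) [∀ i, Fintype (St i)] [∀ i, Fintype (Ac i)]
    [∀ i, DecidableEq (St i)] [∀ i, DecidableEq (Ac i)]
    (φ : ∀ i, Z → Option (St i × Ac i))
    (q : ∀ i, St i → ℝ) (s : ∀ i, St i × Ac i → ℝ)
    (hq : ∀ i h, 0 ≤ q i h) (hs : ∀ i h a, 0 ≤ s i (h, a))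
    (hsq : ∀ i h, ∑ a, s i (h, a) = q i h)
    (hqpos : ∀ i, 0 < ∑ h, q i h)
    (c : ι → ℝ) (hc : ∀ i, 0 < c i)
    (hfactH : ∀ i h,
      (∑ z ∈ Finset.univ.filter (fun z => ∃ a, φ i z = some (h, a)), π z) = c i * q i h)
    (hfact : ∀ i h a,
      (∑ z ∈ Finset.univ.filter (fun z => φ i z = some (h, a)), π z) = c i * s i (h, a))
    (hnoobs : ∀ i a, (∑ h, s i (h, a)) = 0 → ∀ h,
      (∑ z ∈ Finset.univ.filter (fun z => φ i z = some (h, a)), π z) = 0)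
    (u : ∀ i, St i × Ac i → ℝ)
    -- the correction terms (division by zero is 0 in ℝ, matching the convention)
    (k : ι → Z → ℝ)
    (hk : ∀ i z, k i z = match φ i z with
      | none => 0
      | some (_, a₀) =>
          (∑ a, ∑ h, s i (h, a) * u i (h, a)) / (∑ h, q i h)
            - (∑ h, s i (h, a₀) * u i (h, a₀)) / (∑ h, s i (h, a₀))) :
    ∑ z, π z * (B z + ∑ i, k i z) = ∑ z, π z * v z := by

  classical
  have hBsum : ∑ z, π z * B z = ∑ z, π z * v z := by
    have hden : ∀ z : Z, 0 < ∑ w ∈ W z, r w := fun z =>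
      Finset.sum_pos (fun w _ => hr w) ⟨z, hWmem z⟩
    have step1 : ∀ z : Z, π z * B z
        = ∑ z' ∈ W z, r z * (π z' * v z') / (∑ w ∈ W z', r w) := by
      intro z
      rw [hB z, ← mul_div_assoc, Finset.mul_sum, Finset.sum_div]
      refine Finset.sum_congr rfl fun z' hz' => ?_
      rw [hWpart z z' hz']
      have : π z * (r z' * v z') = r z * (π z' * v z') := by
        rw [← mul_assoc, hconst z z' hz']; ring
      rw [this]
    calc ∑ z, π z * B z
        = ∑ z, ∑ z' ∈ W z, r z * (π z' * v z') / (∑ w ∈ W z', r w) :=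
          Finset.sum_congr rfl fun z _ => step1 z
      _ = ∑ z', ∑ z ∈ W z', r z * (π z' * v z') / (∑ w ∈ W z', r w) := by
          refine Finset.sum_comm' fun x y => ?_
          simp only [Finset.mem_univ, true_and, and_true]
          constructor
          · intro hy; rw [hWpart x y hy]; exact hWmem x
          · intro hx; rw [hWpart y x hx]; exact hWmem y
      _ = ∑ z', π z' * v z' := by
          refine Finset.sum_congr rfl fun z' _ => ?_
          rw [← Finset.sum_div, ← Finset.sum_mul,
            mul_comm (∑ z ∈ W z', r z), mul_div_assoc,
            div_self (ne_of_gt (hden z')), mul_one]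
  have hksum : ∀ i, ∑ z, π z * k i z = 0 := by
    intro i
    set T : ℝ := (∑ a, ∑ h, s i (h, a) * u i (h, a)) / (∑ h, q i h) with hT
    set S : Ac i → ℝ := fun a₀ =>
      (∑ h, s i (h, a₀) * u i (h, a₀)) / (∑ h, s i (h, a₀)) with hS
    have hfib : ∑ z, π z * k i z
        = ∑ o : Option (St i × Ac i),
            ∑ z ∈ Finset.univ.filter (fun z => φ i z = o), π z * k i z :=
      (Finset.sum_fiberwise Finset.univ (φ i) (fun z => π z * k i z)).symm
    have hfib2 : ∀ o : Option (St i × Ac i),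
        (∑ z ∈ Finset.univ.filter (fun z => φ i z = o), π z * k i z)
        = (∑ z ∈ Finset.univ.filter (fun z => φ i z = o), π z) *
            (match o with | none => 0 | some (_, a₀) => T - S a₀) := by
      intro o
      rw [Finset.sum_mul]
      refine Finset.sum_congr rfl fun z hz => ?_
      have hz' : φ i z = o := (Finset.mem_filter.mp hz).2
      rw [hk i z, hz']
    rw [hfib]
    calc (∑ o : Option (St i × Ac i),
            ∑ z ∈ Finset.univ.filter (fun z => φ i z = o), π z * k i z)
        = ∑ o : Option (St i × Ac i),
            (∑ z ∈ Finset.univ.filter (fun z => φ i z = o), π z) *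
              (match o with | none => 0 | some (_, a₀) => T - S a₀) :=
          Finset.sum_congr rfl fun o _ => hfib2 o
      _ = ∑ p : St i × Ac i, c i * s i p * (T - S p.2) := by
          rw [Fintype.sum_option]
          simp only [mul_zero, zero_add]
          refine Finset.sum_congr rfl fun p _ => ?_
          obtain ⟨h, a⟩ := p
          rw [hfact i h a]
      _ = 0 := by
          have key2 : ∀ a, (∑ h, s i (h, a)) * S a = ∑ h, s i (h, a) * u i (h, a) := by
            intro a
            by_cases hs0 : (∑ h, s i (h, a)) = 0
            · have hz : ∀ h, s i (h, a) = 0 := fun h =>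
                (Finset.sum_eq_zero_iff_of_nonneg
                  (fun h _ => hs i h a)).mp hs0 h (Finset.mem_univ h)
              rw [hs0, zero_mul]
              exact (Finset.sum_eq_zero fun h _ => by rw [hz h, zero_mul]).symm
            · rw [hS]
              field_simp
          have hqne : (∑ h, q i h) ≠ 0 := ne_of_gt (hqpos i)
          have hTq : (∑ h : St i, q i h) * T = ∑ a, ∑ h, s i (h, a) * u i (h, a) := by
            rw [hT]; field_simp
          have hswap : ∑ a, ∑ h : St i, s i (h, a) = ∑ h, q i h := by
            rw [Finset.sum_comm]
            exact Finset.sum_congr rfl fun h _ => hsq i h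
          calc ∑ p : St i × Ac i, c i * s i p * (T - S p.2)
              = ∑ a, ∑ h, c i * s i (h, a) * (T - S a) := by
                rw [Fintype.sum_prod_type_right]
            _ = ∑ a, c i * ((∑ h, s i (h, a)) * T - ∑ h, s i (h, a) * u i (h, a)) := by
                refine Finset.sum_congr rfl fun a _ => ?_
                calc ∑ h, c i * s i (h, a) * (T - S a)
                    = (∑ h, c i * s i (h, a)) * (T - S a) :=
                      (Finset.sum_mul _ _ _).symm
                  _ = c i * (∑ h, s i (h, a)) * (T - S a) := by rw [← Finset.mul_sum]
                  _ = c i * ((∑ h, s i (h, a)) * T - (∑ h, s i (h, a)) * S a) := by ring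
                  _ = c i * ((∑ h, s i (h, a)) * T - ∑ h, s i (h, a) * u i (h, a)) := by
                      rw [key2 a]
            _ = c i * ((∑ a, (∑ h, s i (h, a)) * T) - ∑ a, ∑ h, s i (h, a) * u i (h, a)) := by
                rw [← Finset.sum_sub_distrib, Finset.mul_sum]
            _ = 0 := by
                rw [← Finset.sum_mul, hswap, hTq]; ring
  calc ∑ z, π z * (B z + ∑ i, k i z)
      = ∑ z, (π z * B z + ∑ i, π z * k i z) := by
        refine Finset.sum_congr rfl fun z _ => ?_
        rw [mul_add, Finset.mul_sum]
    _ = ∑ z, π z * B z + ∑ i, ∑ z, π z * k i z := by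
        rw [Finset.sum_add_distrib, Finset.sum_comm]
    _ = ∑ z, π z * v z := by
        rw [hBsum]
        simp [hksum]
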